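/- arXiv:math/0208029 — 2 statements merged into one kernel-verified Lean document; each statement's English description precedes it below -/
import Mathlib

section
/- In local coordinates (x^1,…,x^n,v^1,…,v^n) on TM, the operator H associated to the Newtonian field Φ = Σ v^i ∂/∂x^i + Σ Φ^i ∂/∂v^i acts on X = Σ X^i ∂/∂x^i + Σ Y^i ∂/∂v^i by H(X) = Σ_k X^k ∂/∂x^k + (1/2) Σ_{s,i} X^i (∂Φ^s/∂v^i) ∂/∂v^s. Consequently H∘H = H, π_*∘H = π_*, and H∘w = 0. -/
/-- `J = w ∘ π_*` sends `(a, b)` to `(0, a)` in a chart on `TM`. -/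
noncomputable def Jmap (n : ℕ) :
    ((Fin n → ℝ) × (Fin n → ℝ)) →L[ℝ] ((Fin n → ℝ) × (Fin n → ℝ)) :=
  (ContinuousLinearMap.inr ℝ (Fin n → ℝ) (Fin n → ℝ)).comp
    (ContinuousLinearMap.fst ℝ (Fin n → ℝ) (Fin n → ℝ))

/-- Lie bracket of vector fields in a chart. -/
noncomputable def lieB {n : ℕ}
    (X Y : ((Fin n → ℝ) × (Fin n → ℝ)) → ((Fin n → ℝ) × (Fin n → ℝ))) :
    ((Fin n → ℝ) × (Fin n → ℝ)) → ((Fin n → ℝ) × (Fin n → ℝ)) :=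
  fun q => fderiv ℝ Y q (X q) - fderiv ℝ X q (Y q)

/-- The operator `H(X) = (X + [w(π_*(X)), Φ] − w(π_*([X, Φ])))/2`. -/
noncomputable def Hop {n : ℕ}
    (Φ X : ((Fin n → ℝ) × (Fin n → ℝ)) → ((Fin n → ℝ) × (Fin n → ℝ))) :
    ((Fin n → ℝ) × (Fin n → ℝ)) → ((Fin n → ℝ) × (Fin n → ℝ)) :=
  fun q => (2⁻¹ : ℝ) •
    (X q + lieB (fun q' => Jmap n (X q')) Φ q - Jmap n (lieB X Φ q))

lemma Jmap_apply {n : ℕ} (p : (Fin n → ℝ) × (Fin n → ℝ)) : Jmap n p = (0, p.1) := rfl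

lemma Hop_key {n : ℕ}
    (F : ((Fin n → ℝ) × (Fin n → ℝ)) → (Fin n → ℝ))
    (X : ((Fin n → ℝ) × (Fin n → ℝ)) → ((Fin n → ℝ) × (Fin n → ℝ)))
    (hF : ContDiff ℝ (⊤ : ℕ∞) F) (hX : ContDiff ℝ (⊤ : ℕ∞) X) (q : (Fin n → ℝ) × (Fin n → ℝ)) :
    Hop (fun q' => (q'.2, F q')) X q
        = ((X q).1, (2⁻¹ : ℝ) • fderiv ℝ F q (0, (X q).1)) := by
  have hFd : DifferentiableAt ℝ F q := (hF.differentiable (by simp)).differentiableAt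
  have hXd : DifferentiableAt ℝ X q := (hX.differentiable (by simp)).differentiableAt
  have hΦ : fderiv ℝ (fun q' : (Fin n → ℝ) × (Fin n → ℝ) => (q'.2, F q')) q
      = (ContinuousLinearMap.snd ℝ (Fin n → ℝ) (Fin n → ℝ)).prod (fderiv ℝ F q) := by
    rw [DifferentiableAt.fderiv_prodMk differentiableAt_snd hFd, fderiv_snd]
  have hJ : fderiv ℝ (fun q' => Jmap n (X q')) q = (Jmap n).comp (fderiv ℝ X q) := by
    rw [show (fun q' => Jmap n (X q')) = (Jmap n) ∘ X from rfl,
      fderiv_comp q (Jmap n).differentiableAt hXd, (Jmap n).fderiv]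
  simp only [Hop, lieB, hΦ, hJ]
  simp only [ContinuousLinearMap.comp_apply, map_sub, ContinuousLinearMap.prod_apply,
    Jmap_apply, ContinuousLinearMap.coe_snd']
  ext i <;> simp [two_smul] <;> ring

/-- For a Newtonian field `Φ(x,v) = (v, F(x,v))`,
`H(X) q = (X¹ q, (1/2)·(∂F/∂v)(X¹ q))`, and consequently
`H∘H = H`, `π_*∘H = π_*`, `H∘w = 0`. -/
theorem Hop_newtonian {n : ℕ}
    (F : ((Fin n → ℝ) × (Fin n → ℝ)) → (Fin n → ℝ))
    (X : ((Fin n → ℝ) × (Fin n → ℝ)) → ((Fin n → ℝ) × (Fin n → ℝ)))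
    (hF : ContDiff ℝ (⊤ : ℕ∞) F) (hX : ContDiff ℝ (⊤ : ℕ∞) X) :
    (∀ q, Hop (fun q' => (q'.2, F q')) X q
        = ((X q).1, (2⁻¹ : ℝ) • fderiv ℝ F q (0, (X q).1)))
    ∧ (∀ q, Hop (fun q' => (q'.2, F q')) (Hop (fun q' => (q'.2, F q')) X) q
        = Hop (fun q' => (q'.2, F q')) X q)
    ∧ (∀ q, (Hop (fun q' => (q'.2, F q')) X q).1 = (X q).1)
    ∧ (∀ q, Hop (fun q' => (q'.2, F q')) (fun q' => Jmap n (X q')) q = 0) := by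
  have key := Hop_key F X hF hX
  have hX1 : ContDiff ℝ (⊤ : ℕ∞) (fun q => (X q).1) := contDiff_fst.comp hX
  have hG : ContDiff ℝ (⊤ : ℕ∞)
      (fun q => (((X q).1 : Fin n → ℝ), (2⁻¹ : ℝ) • fderiv ℝ F q (0, (X q).1))) := by
    refine hX1.prodMk (ContDiff.const_smul _ ?_)
    exact ((hF.fderiv_right (by simp)).clm_apply (contDiff_const.prodMk hX1))
  refine ⟨key, ?_, fun q => by rw [key q], ?_⟩
  · intro q
    have hHX : Hop (fun q' => (q'.2, F q')) X
        = fun q => (((X q).1 : Fin n → ℝ), (2⁻¹ : ℝ) • fderiv ℝ F q (0, (X q).1)) :=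
      funext key
    rw [hHX, Hop_key F _ hF hG]
  · intro q
    have hJX : ContDiff ℝ (⊤ : ℕ∞) (fun q' => Jmap n (X q')) := (Jmap n).contDiff.comp hX
    rw [Hop_key F _ hF hJX]
    simp [Jmap_apply, Prod.mk_zero_zero]
end

section
/- Let V be an n-dimensional real vector space, P : V → V a projection with (n−1)-dimensional image U, and B : V → V a linear operator such that for every symmetric bilinear form b on V satisfying b(x,y) = b(P(x), P(y)) for all x, y, the operator P∘B∘P is b-symmetric (b(PBP(x), y) = b(x, PBP(y)) for all x, y). If n ≥ 3, then P∘B∘P = λ·P where λ = tr(B∘P)/(n−1). -/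
/-!
Testing the symmetry of `T = P ∘ B ∘ P` against the rank-one forms `b(x, y) = f(P x) f(P y)`
gives `f(T x)² = f(P x) f(T² x)`, so every linear form vanishing on `P x` vanishes on `T x`,
i.e. `T x` is a multiple of `P x`. An operator on `U = range P` for which every vector is an
eigenvector is a homothety, so `T = λ • P`, and taking traces gives
`tr (B ∘ P) = tr T = λ · rank P = λ (n - 1)`.
-/

open Module Submodule

section

variable {K V : Type*} [Field K] [AddCommGroup V] [Module K V]

theorem Submodule.mem_span_singleton_of_forall_dual {u v : V}
    (h : ∀ f : Dual K V, f u = 0 → f v = 0) : v ∈ K ∙ u := by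
  by_contra hv
  obtain ⟨f, hfv, hf⟩ := exists_dual_map_eq_bot_of_notMem hv inferInstance
  have hfu : f u ∈ (K ∙ u).map f := mem_map_of_mem (mem_span_singleton_self u)
  rw [hf, mem_bot] at hfu
  exact hfv (h f hfu)

namespace LinearMap

theorem apply_mem_span_singleton_of_forall_isSymm {P T : V →ₗ[K] V} (hP : IsIdempotentElem P)
    (hPT : P ∘ₗ T = T)
    (hT : ∀ b : LinearMap.BilinForm K V, b.IsSymm → (∀ x y, b x y = b (P x) (P y)) →
      ∀ x y, b (T x) y = b x (T y))
    (x : V) : T x ∈ K ∙ P x := by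
  refine mem_span_singleton_of_forall_dual fun f hfx => ?_
  have hPP : ∀ x, P (P x) = P x := fun x => LinearMap.congr_fun hP x
  let b : LinearMap.BilinForm K V := (f ∘ₗ P).smulRight (f ∘ₗ P)
  have hb : ∀ x y, b x y = f (P x) * f (P y) := fun _ _ => rfl
  have hsymm : b.IsSymm := ⟨fun x y => by simp only [hb, mul_comm]⟩
  have hfactor : ∀ x y, b x y = b (P x) (P y) := fun x y => by simp only [hb, hPP]
  have key := hT b hsymm hfactor x (T x)
  simp only [hb, hfx, zero_mul, ← comp_apply P T, hPT] at key
  exact mul_self_eq_zero.mp key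

theorem exists_eq_smul_of_forall_mem_span_singleton {P T : V →ₗ[K] V} (hP : IsIdempotentElem P)
    (hTP : T ∘ₗ P = T) (h : ∀ x, T x ∈ K ∙ P x) : ∃ c : K, T = c • P := by
  have hfix : ∀ u ∈ range P, P u = u := fun u hu => (IsIdempotentElem.mem_range_iff hP).mp hu
  have hmaps : ∀ u ∈ range P, T u ∈ range P := fun u hu =>
    (span_singleton_le_iff_mem _ _).mpr hu (by simpa only [hfix u hu] using h u)
  obtain ⟨c, hc⟩ := exists_eq_smul_id_of_forall_notLinearIndependent
    (f := T.restrict hmaps) fun u => by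
      obtain ⟨a, ha⟩ := mem_span_singleton.mp (h u)
      rw [LinearIndependent.pair_symm_iff, linearIndependent_fin2]
      refine fun ⟨_, hne⟩ => hne a (Subtype.ext ?_)
      simpa [hfix u u.2] using ha
  refine ⟨c, ext fun x => ?_⟩
  have := congr_arg Subtype.val (LinearMap.congr_fun hc ⟨P x, mem_range_self P x⟩)
  simpa [← comp_apply T P, hTP] using this

end LinearMap

end

theorem PBP_eq_smul_P_general
    {V : Type*} [AddCommGroup V] [Module ℝ V] [FiniteDimensional ℝ V]
    (P B : V →ₗ[ℝ] V)
    (hP : P ∘ₗ P = P)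
    (hrank : Module.finrank ℝ (LinearMap.range P) = Module.finrank ℝ V - 1)
    (hB : ∀ b : LinearMap.BilinForm ℝ V, b.IsSymm →
      (∀ x y, b x y = b (P x) (P y)) →
      ∀ x y, b ((P ∘ₗ B ∘ₗ P) x) y = b x ((P ∘ₗ B ∘ₗ P) y)) :
    P ∘ₗ B ∘ₗ P
      = (LinearMap.trace ℝ V (B ∘ₗ P) / ((Module.finrank ℝ V : ℝ) - 1)) • P := by
  have hidem : IsIdempotentElem P := hP
  obtain ⟨c, hc⟩ := LinearMap.exists_eq_smul_of_forall_mem_span_singleton hidem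
    (by rw [LinearMap.comp_assoc, LinearMap.comp_assoc, hP])
    (LinearMap.apply_mem_span_singleton_of_forall_isSymm hidem
      (by rw [← LinearMap.comp_assoc, hP]) hB)
  rcases eq_or_ne P 0 with rfl | hP0
  · simp
  have hrank_ne : finrank ℝ (LinearMap.range P) ≠ 0 := by
    rwa [Ne, Submodule.finrank_eq_zero, LinearMap.range_eq_bot]
  have htrace : LinearMap.trace ℝ V (B ∘ₗ P) = c * ((finrank ℝ V : ℝ) - 1) := by
    rw [← hP, ← LinearMap.comp_assoc, LinearMap.trace_comp_comm', hc, map_smul,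
      (LinearMap.IsIdempotentElem.isProj_range P hidem).trace, hrank, Nat.cast_pred (by omega),
      smul_eq_mul]
  have hdenom : (finrank ℝ V : ℝ) - 1 ≠ 0 :=
    sub_ne_zero.mpr (by exact_mod_cast (by omega : finrank ℝ V ≠ 1))
  rw [hc, htrace, mul_div_cancel_right₀ _ hdenom]

/-- If `P` is a projector of rank `n−1` (`n = dim V ≥ 3`) and `P∘B∘P` is
symmetric w.r.t. every symmetric bilinear form `b` factoring through `P`, then
`P∘B∘P = λ·P` with `λ = tr(B∘P)/(n−1)`. -/
theorem PBP_eq_smul_P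
    {V : Type*} [AddCommGroup V] [Module ℝ V] [FiniteDimensional ℝ V]
    (hn : 3 ≤ Module.finrank ℝ V)
    (P B : V →ₗ[ℝ] V)
    (hP : P ∘ₗ P = P)
    (hrank : Module.finrank ℝ (LinearMap.range P) = Module.finrank ℝ V - 1)
    (hB : ∀ b : LinearMap.BilinForm ℝ V, b.IsSymm →
      (∀ x y, b x y = b (P x) (P y)) →
      ∀ x y, b ((P ∘ₗ B ∘ₗ P) x) y = b x ((P ∘ₗ B ∘ₗ P) y)) :
    P ∘ₗ B ∘ₗ P
      = (LinearMap.trace ℝ V (B ∘ₗ P) / ((Module.finrank ℝ V : ℝ) - 1)) • P :=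
  PBP_eq_smul_P_general P B hP hrank hB
end
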